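/- Let α, β, t be nonnegative real numbers with α + β = 1, let ζ ∈ ℂ with ‖ζ‖ = 1, and let b be the 2×2 complex matrix !![α, 0; ζ·t, β]. Then the trace norm of b equals √(1 + t²); precisely, the trace of the positive semidefinite square root of bᴴ * b equals √(1 + t²). -/

import Mathlib

/-!
For a 2×2 matrix `A` and a square root `c` of `det A`, Cayley–Hamilton gives
`(A + c)² = (tr A + 2c) A`. If `A ⪰ 0` and `c ≥ 0`, then `(A + c) / √(tr A + 2c)` is a positive
semidefinite square root of `A`, hence equal to `√A`, and `tr √A = √(tr A + 2c)`.
For `A = bᴴb` we have `det A = |det b|² = (αβ)²` and `tr A = α² + β² + |ζ|²t²`, so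
`tr A + 2αβ = (α + β)² + t² = 1 + t²`.
-/

open scoped ComplexOrder

/-- The positive semidefinite square root of a positive semidefinite matrix
(as defined in Mathlib of December 2024, since removed). -/
noncomputable def Matrix.PosSemidef.sqrt {n : Type*} [Fintype n] [DecidableEq n] {𝕜 : Type*}
    [RCLike 𝕜] {A : Matrix n n 𝕜} (hA : A.PosSemidef) : Matrix n n 𝕜 :=
  hA.1.eigenvectorUnitary.1 * Matrix.diagonal ((↑) ∘ (√·) ∘ hA.1.eigenvalues) *
  (star hA.1.eigenvectorUnitary : Matrix n n 𝕜)

open scoped Matrix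

namespace Matrix

theorem sq_add_smul_one_fin_two {R : Type*} [CommRing R] (A : Matrix (Fin 2) (Fin 2) R) {c : R}
    (hc : c ^ 2 = A.det) : (A + c • 1) ^ 2 = (A.trace + 2 * c) • A := by
  ext i j
  fin_cases i <;> fin_cases j <;>
    simp [sq, mul_apply, Fin.sum_univ_two, det_fin_two, trace_fin_two] at hc ⊢ <;>
    first | ring1 | linear_combination hc

variable {n : Type*} [Fintype n] {𝕜 : Type*} [RCLike 𝕜]

namespace PosSemidef

theorem ofReal_re_trace {A : Matrix n n 𝕜} (hA : A.PosSemidef) :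
    (RCLike.re A.trace : 𝕜) = A.trace := by
  obtain ⟨τ, -, hτ⟩ := RCLike.nonneg_iff_exists_ofReal.1 hA.trace_nonneg
  rw [← hτ, RCLike.ofReal_re]

theorem sq_sqrt_re_trace_add {A : Matrix n n 𝕜} (hA : A.PosSemidef) {c : ℝ} (hc : 0 ≤ c) :
    (√(RCLike.re A.trace + 2 * c) : 𝕜) ^ 2 = A.trace + 2 * c := by
  have hre := RCLike.nonneg_iff.1 hA.trace_nonneg
  rw [← RCLike.ofReal_pow, Real.sq_sqrt (by linarith), RCLike.ofReal_add, hA.ofReal_re_trace]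
  push_cast
  rfl

variable [DecidableEq n]

open scoped MatrixOrder in
theorem sqrt_eq_of_sq_eq {A B : Matrix n n 𝕜} (hA : A.PosSemidef) (hB : B.PosSemidef)
    (h : B ^ 2 = A) : hA.sqrt = B := by
  have hcfc : CFC.sqrt A = B := CFC.sqrt_unique (by rw [← h, sq]) hB.nonneg
  rw [← hcfc, CFC.sqrt_eq_cfc, cfc_nnreal_eq_real _ A hA.nonneg, hA.1.cfc_eq, IsHermitian.cfc,
    Unitary.conjStarAlgAut_apply, PosSemidef.sqrt]
  congr 3
  funext i
  simp [Real.coe_sqrt, Real.coe_toNNReal', hA.eigenvalues_nonneg i]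

theorem sqrt_fin_two {A : Matrix (Fin 2) (Fin 2) 𝕜} (hA : A.PosSemidef) {c : ℝ} (hc : 0 ≤ c)
    (hdet : A.det = (c : 𝕜) ^ 2) :
    hA.sqrt = (√(RCLike.re A.trace + 2 * c) : 𝕜)⁻¹ • (A + (c : 𝕜) • 1) := by
  set r := √(RCLike.re A.trace + 2 * c) with hr
  have hs : ((r : 𝕜)⁻¹ • (A + (c : 𝕜) • 1)).PosSemidef :=
    (hA.add (PosSemidef.one.smul (RCLike.ofReal_nonneg.2 hc))).smul
      (inv_nonneg.2 (RCLike.ofReal_nonneg.2 (Real.sqrt_nonneg _)))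
  refine hA.sqrt_eq_of_sq_eq hs ?_
  rw [smul_pow, sq_add_smul_one_fin_two A hdet.symm, ← hA.sq_sqrt_re_trace_add hc, smul_smul]
  rcases eq_or_ne r 0 with hr0 | hr0
  · have hA0 : A = 0 := by
      have hre := (RCLike.nonneg_iff.1 hA.trace_nonneg).1
      rw [hr, Real.sqrt_eq_zero (by positivity)] at hr0
      rw [← hA.trace_eq_zero_iff, ← hA.ofReal_re_trace,
        show RCLike.re A.trace = 0 by linarith, RCLike.ofReal_zero]
    simp [hA0]
  · rw [inv_pow, inv_mul_cancel₀ (pow_ne_zero 2 (RCLike.ofReal_ne_zero.2 hr0)), one_smul]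

theorem trace_sqrt_fin_two {A : Matrix (Fin 2) (Fin 2) 𝕜} (hA : A.PosSemidef) {c : ℝ}
    (hc : 0 ≤ c) (hdet : A.det = (c : 𝕜) ^ 2) :
    hA.sqrt.trace = √(RCLike.re A.trace + 2 * c) := by
  rw [hA.sqrt_fin_two hc hdet, trace_smul, trace_add, trace_smul, trace_one, Fintype.card_fin,
    smul_eq_mul, smul_eq_mul, mul_comm (c : 𝕜), Nat.cast_ofNat, ← hA.sq_sqrt_re_trace_add hc, sq,
    ← mul_assoc, inv_mul_mul_self]

end PosSemidef

end Matrix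

theorem trace_norm_example (α β t : ℝ) (hα : 0 ≤ α) (hβ : 0 ≤ β)
    (hαβ : α + β = 1) (ζ : ℂ) (hζ : ‖ζ‖ = 1) :
    (Matrix.posSemidef_conjTranspose_mul_self
        (!![(α : ℂ), 0; ζ * (t : ℂ), (β : ℂ)])).sqrt.trace
      = (Real.sqrt (1 + t ^ 2) : ℂ) := by
  set b : Matrix (Fin 2) (Fin 2) ℂ := !![(α : ℂ), 0; ζ * (t : ℂ), (β : ℂ)]
  have hdet : (bᴴ * b).det = ((α * β : ℝ) : ℂ) ^ 2 := by
    simp only [b, Matrix.det_mul, Matrix.det_conjTranspose, Matrix.det_fin_two_of, zero_mul,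
      sub_zero, star_mul', RCLike.star_def, Complex.conj_ofReal, Complex.ofReal_mul]
    ring
  have htr : RCLike.re (bᴴ * b).trace + 2 * (α * β) = 1 + t ^ 2 := by
    have hζ2 : ζ.re * ζ.re + ζ.im * ζ.im = 1 := by
      rw [← Complex.normSq_apply, ← Complex.sq_norm, hζ, one_pow]
    simp [b, Matrix.trace_fin_two, Matrix.mul_apply, Fin.sum_univ_two]
    linear_combination (α + β + 1) * hαβ + t ^ 2 * hζ2
  rw [(Matrix.posSemidef_conjTranspose_mul_self b).trace_sqrt_fin_two (mul_nonneg hα hβ) hdet, htr]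
  rfl
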